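/- Let (j_i, k_i), i = 1,...,s, be good pairs for d (i.e. |{d j_i + 2^m k_i}_{2^{ℓ+m}}| ≤ 2^{m-2}), with 0 < d < 2^m, and let v = ({-2^m k_1}_{2^{ℓ+m}}, ..., {-2^m k_s}_{2^{ℓ+m}}, 0) ∈ ℤ^{s+1}. Then there exist integers m_1, ..., m_s such that the lattice vector u = ({d j_1}_{2^{ℓ+m}} + m_1 2^{ℓ+m}, ..., {d j_s}_{2^{ℓ+m}} + m_s 2^{ℓ+m}, d) satisfies |u - v| < √(s/4 + 1) · 2^m. -/

import Mathlib

/-!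
Reduce `u - v` coordinatewise: since `{x}_n ≡ x (mod n)`, the multiples `c_i` can be chosen so that
`u_i - v_i = {d j_i + 2^m k_i}_n`, which has absolute value at most `2^(m-2) ≤ 2^m / 2` for a good pair.
The last coordinate of `u - v` is `d < 2^m`, so `|u - v|² < s · 4^m / 4 + 4^m`.
-/

/-- `smod u n` is `u` reduced modulo `n` constrained to `[-n/2, n/2)` (for even positive `n`). -/
def smod (u n : ℤ) : ℤ := (u + n / 2) % n - n / 2

theorem smod_modEq (u n : ℤ) : smod u n ≡ u [ZMOD n] := by
  simpa [smod] using (Int.mod_modEq (u + n / 2) n).sub_right (n / 2)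

theorem exists_smod_add_mul_sub_smod_eq_smod_add (a b n : ℤ) :
    ∃ c : ℤ, smod a n + c * n - smod (-b) n = smod (a + b) n := by
  have hmod : smod a n - smod (-b) n ≡ smod (a + b) n [ZMOD n] := by
    calc smod a n - smod (-b) n ≡ a - -b [ZMOD n] := (smod_modEq a n).sub (smod_modEq (-b) n)
      _ = a + b := sub_neg_eq_add a b
      _ ≡ smod (a + b) n [ZMOD n] := (smod_modEq (a + b) n).symm
  obtain ⟨c, hc⟩ := Int.modEq_iff_add_fac.mp hmod
  exact ⟨c, by rw [hc]; ring⟩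

theorem Fin.sum_sq_snoc_sub_snoc {s : ℕ} (x y : Fin s → ℤ) (a b : ℤ) :
    ∑ i : Fin (s + 1),
        (((Fin.snoc x a : Fin (s + 1) → ℤ) i - (Fin.snoc y b : Fin (s + 1) → ℤ) i : ℤ) : ℝ) ^ 2 =
      ∑ i, ((x i - y i : ℤ) : ℝ) ^ 2 + ((a - b : ℤ) : ℝ) ^ 2 := by
  simp only [Fin.sum_univ_castSucc, Fin.snoc_castSucc, Fin.snoc_last]

theorem four_mul_sq_le_sq_two_pow {m : ℕ} (hm : 1 ≤ m) {x : ℤ} (hx : |x| ≤ 2 ^ (m - 2)) :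
    4 * x ^ 2 ≤ (2 ^ m) ^ 2 := by
  have htwice : 2 * |x| ≤ 2 ^ m :=
    calc 2 * |x| ≤ 2 * 2 ^ (m - 2) := by gcongr
      _ ≤ 2 * 2 ^ (m - 1) := by gcongr <;> omega
      _ = 2 ^ m := by rw [← pow_succ']; congr 1; omega
  calc 4 * x ^ 2 = (2 * |x|) ^ 2 := by rw [mul_pow, sq_abs]; norm_num
    _ ≤ (2 ^ m) ^ 2 := by gcongr

theorem sqrt_sum_sq_add_sq_lt {s : ℕ} (x : Fin s → ℝ) {a B : ℝ}
    (hx : ∀ i, 4 * x i ^ 2 ≤ B ^ 2) (ha : |a| < B) :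
    Real.sqrt (∑ i, x i ^ 2 + a ^ 2) < Real.sqrt ((s : ℝ) / 4 + 1) * B := by
  have hB : 0 < B := (abs_nonneg a).trans_lt ha
  have hsum : ∑ i, x i ^ 2 ≤ s * (B ^ 2 / 4) := by
    simpa using Finset.sum_le_card_nsmul Finset.univ (fun i => x i ^ 2) (B ^ 2 / 4)
      (fun i _ => by linarith [hx i])
  have hlast : a ^ 2 < B ^ 2 := sq_lt_sq' (abs_lt.mp ha).1 (abs_lt.mp ha).2
  rw [Real.sqrt_lt' (by positivity), mul_pow, Real.sq_sqrt (by positivity)]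
  linarith

theorem close_lattice_vector_exists_general (s ℓ m : ℕ) (hm : 1 ≤ m)
    (d : ℤ) (hd : 0 < d) (hd' : d < 2 ^ m) (j k : Fin s → ℤ)
    (hjk : ∀ i, 0 ≤ j i ∧ j i < 2 ^ (ℓ + m) ∧ 0 ≤ k i ∧ k i < 2 ^ ℓ ∧
      |smod (d * j i + 2 ^ m * k i) (2 ^ (ℓ + m))| ≤ 2 ^ (m - 2)) :
    ∃ c : Fin s → ℤ,
      Real.sqrt (∑ i : Fin (s + 1),
          (((Fin.snoc (fun i => smod (d * j i) (2 ^ (ℓ + m)) + c i * 2 ^ (ℓ + m)) d :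
                Fin (s + 1) → ℤ) i -
            (Fin.snoc (fun i => smod (-(2 ^ m * k i)) (2 ^ (ℓ + m))) 0 :
                Fin (s + 1) → ℤ) i : ℤ) : ℝ) ^ 2) <
        Real.sqrt ((s : ℝ) / 4 + 1) * 2 ^ m := by
  choose c hc using fun i =>
    exists_smod_add_mul_sub_smod_eq_smod_add (d * j i) (2 ^ m * k i) (2 ^ (ℓ + m))
  refine ⟨c, ?_⟩
  rw [Fin.sum_sq_snoc_sub_snoc]
  simp only [hc, sub_zero]
  refine sqrt_sum_sq_add_sq_lt _ (fun i => ?_) ?_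
  · exact_mod_cast four_mul_sq_le_sq_two_pow hm (hjk i).2.2.2.2
  · rw [abs_of_pos (by exact_mod_cast hd)]
    exact_mod_cast hd'

theorem close_lattice_vector_exists (s ℓ m : ℕ) (hs : 1 ≤ s) (hl : 1 ≤ ℓ) (hm : 1 ≤ m)
    (d : ℤ) (hd : 0 < d) (hd' : d < 2 ^ m) (j k : Fin s → ℤ)
    (hjk : ∀ i, 0 ≤ j i ∧ j i < 2 ^ (ℓ + m) ∧ 0 ≤ k i ∧ k i < 2 ^ ℓ ∧
      |smod (d * j i + 2 ^ m * k i) (2 ^ (ℓ + m))| ≤ 2 ^ (m - 2)) :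
    ∃ c : Fin s → ℤ,
      Real.sqrt (∑ i : Fin (s + 1),
          (((Fin.snoc (fun i => smod (d * j i) (2 ^ (ℓ + m)) + c i * 2 ^ (ℓ + m)) d :
                Fin (s + 1) → ℤ) i -
            (Fin.snoc (fun i => smod (-(2 ^ m * k i)) (2 ^ (ℓ + m))) 0 :
                Fin (s + 1) → ℤ) i : ℤ) : ℝ) ^ 2) <
        Real.sqrt ((s : ℝ) / 4 + 1) * 2 ^ m :=
  close_lattice_vector_exists_general s ℓ m hm d hd hd' j k hjk
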